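/- Let σ₀, σ̂₀ > 0 and let (Σ, g₁, g₂) ∈ E be a point on the branch S₂ of the yield surface, i.e. ‖skew Σ‖ + g₂ = σ̂₀ and ‖dev sym Σ‖ + g₁ ≤ 0, with skew Σ ≠ 0. For λ ≥ 0 set ṗ = λ·(skew Σ)/‖skew Σ‖, γ̇ = 0, ω̇ = λ. Then (ṗ, γ̇, ω̇) lies in the normal cone to E at (Σ, g₁, g₂): for every (Σ̄, ḡ₁, ḡ₂) ∈ E, ⟨ṗ, Σ̄ − Σ⟩ + γ̇(ḡ₁ − g₁) + ω̇(ḡ₂ − g₂) ≤ 0. -/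
import Mathlib
open Matrix

noncomputable section

abbrev M3 := Matrix (Fin 3) (Fin 3) ℝ
def msym (X : M3) : M3 := (1/2 : ℝ) • (X + Xᵀ)
def mskew (X : M3) : M3 := (1/2 : ℝ) • (X - Xᵀ)
def mdev (X : M3) : M3 := X - (X.trace / 3) • (1 : M3)
def minner (A B : M3) : ℝ := (A * Bᵀ).trace
def mnorm (A : M3) : ℝ := Real.sqrt (minner A A)

lemma minner_eq_sum (A B : M3) : minner A B = ∑ p : Fin 3 × Fin 3, A p.1 p.2 * B p.1 p.2 := by
  simp [minner, Matrix.trace, Matrix.mul_apply, Matrix.diag, Fintype.sum_prod_type]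

lemma minner_self_nonneg (A : M3) : 0 ≤ minner A A := by
  rw [minner_eq_sum]
  exact Finset.sum_nonneg fun p _ => mul_self_nonneg _

lemma mnorm_sq (A : M3) : mnorm A ^ 2 = minner A A :=
  Real.sq_sqrt (minner_self_nonneg A)

lemma mnorm_eq_sqrt_sum (A : M3) :
    mnorm A = Real.sqrt (∑ p : Fin 3 × Fin 3, A p.1 p.2 ^ 2) := by
  rw [mnorm, minner_eq_sum]
  congr 1
  exact Finset.sum_congr rfl fun p _ => by ring

lemma minner_le (A B : M3) : minner A B ≤ mnorm A * mnorm B := by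
  rw [minner_eq_sum]
  have h := Finset.sum_mul_sq_le_sq_mul_sq Finset.univ
    (fun p : Fin 3 × Fin 3 => A p.1 p.2) (fun p : Fin 3 × Fin 3 => B p.1 p.2)
  calc ∑ p : Fin 3 × Fin 3, A p.1 p.2 * B p.1 p.2
      ≤ |∑ p : Fin 3 × Fin 3, A p.1 p.2 * B p.1 p.2| := le_abs_self _
    _ = Real.sqrt ((∑ p : Fin 3 × Fin 3, A p.1 p.2 * B p.1 p.2)^2) := (Real.sqrt_sq_eq_abs _).symm
    _ ≤ Real.sqrt ((∑ p : Fin 3 × Fin 3, A p.1 p.2 ^ 2) * ∑ p : Fin 3 × Fin 3, B p.1 p.2 ^ 2) :=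
        Real.sqrt_le_sqrt h
    _ = mnorm A * mnorm B := by
        rw [Real.sqrt_mul (by positivity), mnorm_eq_sqrt_sum, mnorm_eq_sqrt_sum]

lemma mskew_transpose (X : M3) : (mskew X)ᵀ = -(mskew X) := by
  ext i j; simp [mskew, Matrix.transpose_apply]; ring

lemma msym_transpose (Y : M3) : (msym Y)ᵀ = msym Y := by
  ext i j; simp [msym, Matrix.transpose_apply]; ring

lemma minner_skew_sym (X Y : M3) : minner (mskew X) (msym Y) = 0 := by
  set A := mskew X
  set B := msym Y
  have hA : Aᵀ = -A := mskew_transpose X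
  have hB : Bᵀ = B := msym_transpose Y
  have : (A * Bᵀ).trace = -(A * Bᵀ).trace := by
    calc (A * Bᵀ).trace = (A * B).trace := by rw [hB]
      _ = ((A * B)ᵀ).trace := (Matrix.trace_transpose _).symm
      _ = (Bᵀ * Aᵀ).trace := by rw [Matrix.transpose_mul]
      _ = (B * -A).trace := by rw [hA, hB]
      _ = -(B * A).trace := by rw [Matrix.mul_neg, Matrix.trace_neg]
      _ = -(A * B).trace := by rw [Matrix.trace_mul_comm]
      _ = -(A * Bᵀ).trace := by rw [hB]
  have h0 : minner A B = (A * Bᵀ).trace := rfl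
  rw [h0]; linarith

lemma sym_add_skew (X : M3) : msym X + mskew X = X := by
  ext i j; simp [msym, mskew]; ring

lemma minner_sub_right (A B C : M3) : minner A (B - C) = minner A B - minner A C := by
  simp [minner, Matrix.transpose_sub, Matrix.mul_sub]

lemma minner_smul_left (c : ℝ) (A B : M3) : minner (c • A) B = c * minner A B := by
  simp [minner, Matrix.smul_mul]

lemma minner_skew_eq (A X : M3) : minner (mskew A) X = minner (mskew A) (mskew X) := by
  conv_lhs => rw [← sym_add_skew X]
  have h : mskew A * (msym X + mskew X)ᵀ = mskew A * (msym X)ᵀ + mskew A * (mskew X)ᵀ := by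
    rw [Matrix.transpose_add, Matrix.mul_add]
  unfold minner
  rw [h, Matrix.trace_add]
  have h0 := minner_skew_sym A X
  unfold minner at h0
  rw [h0, zero_add]

/-- The set `K = K₁ ∪ K₂ ∪ K₃` of the paper. -/
def Kset (s0 sh0 : ℝ) : Set (ℝ × ℝ) :=
  {p | p.1 ≤ s0 ∧ p.2 ≤ 0} ∪ {p | p.1 ≤ 0 ∧ p.2 ≤ sh0} ∪
    {p | 0 ≤ p.1 ∧ 0 ≤ p.2 ∧ p.1 ^ 2 / s0 ^ 2 + p.2 ^ 2 / sh0 ^ 2 ≤ 1}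

/-- The set `E` of admissible generalized stresses. -/
def Eset (s0 sh0 : ℝ) : Set (M3 × ℝ × ℝ) :=
  {x | x.2.1 ≤ 0 ∧ x.2.2 ≤ 0 ∧
    (mnorm (mdev (msym x.1)) + x.2.1, mnorm (mskew x.1) + x.2.2) ∈ Kset s0 sh0}

/-- Dual flow rule on the branch `S₂` of the yield surface: the rate
`(ṗ, γ̇, ω̇) = (λ·(skew Σ)/‖skew Σ‖, 0, λ)` lies in the normal cone to `E`
at `(Σ, g₁, g₂)`. -/
theorem flow_rule_on_S2 (s0 sh0 : ℝ) (hs0 : 0 < s0) (hsh0 : 0 < sh0)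
    (S : M3) (g1 g2 : ℝ) (hE : (S, g1, g2) ∈ Eset s0 sh0)
    (hS2a : mnorm (mskew S) + g2 = sh0)
    (hS2b : mnorm (mdev (msym S)) + g1 ≤ 0)
    (hskew : mskew S ≠ 0)
    (lam : ℝ) (hlam : 0 ≤ lam) :
    ∀ S' : M3, ∀ g1' g2' : ℝ, (S', g1', g2') ∈ Eset s0 sh0 →
      minner ((lam / mnorm (mskew S)) • mskew S) (S' - S) +
        0 * (g1' - g1) + lam * (g2' - g2) ≤ 0 := by
  intro S' g1' g2' hE'
  have hn_pos : 0 < mnorm (mskew S) := by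
    rw [mnorm]
    apply Real.sqrt_pos.mpr
    rcases lt_or_eq_of_le (minner_self_nonneg (mskew S)) with h | h
    · exact h
    · exfalso; apply hskew
      ext i j
      have hs := minner_eq_sum (mskew S) (mskew S)
      rw [← h] at hs
      have := (Finset.sum_eq_zero_iff_of_nonneg (fun p _ => mul_self_nonneg (mskew S p.1 p.2))).mp
        hs.symm (i, j) (Finset.mem_univ _)
      simpa using mul_self_eq_zero.mp this
  set n := mnorm (mskew S) with hn
  have hK' : mnorm (mskew S') + g2' ≤ sh0 := by
    obtain ⟨h1', h2', hK⟩ := hE'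
    dsimp only at h1' h2' hK
    rcases hK with (h | h) | h
    · exact h.2.trans hsh0.le
    · exact h.2
    · obtain ⟨hA, hB, hsum⟩ := h
      dsimp only at hA hB hsum
      set B := mnorm (mskew S') + g2'
      have h1 : (0:ℝ) ≤ (mnorm (mdev (msym S')) + g1') ^ 2 / s0 ^ 2 := by positivity
      have h2 : B ^ 2 / sh0 ^ 2 ≤ 1 := by linarith
      have h3 : B ^ 2 ≤ sh0 ^ 2 := by
        rw [div_le_one (by positivity)] at h2; exact h2
      nlinarith
  have key : minner (mskew S) (S' - S) ≤ n * (mnorm (mskew S') - n) := by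
    rw [minner_sub_right, minner_skew_eq (A := S) (X := S'), minner_skew_eq (A := S) (X := S)]
    have h1 : minner (mskew S) (mskew S') ≤ n * mnorm (mskew S') := minner_le _ _
    have h2 : minner (mskew S) (mskew S) = n ^ 2 := (mnorm_sq _).symm
    nlinarith
  rw [minner_smul_left]
  have hfrac : 0 ≤ lam / n := div_nonneg hlam hn_pos.le
  have hmain : lam / n * minner (mskew S) (S' - S) ≤ lam / n * (n * (mnorm (mskew S') - n)) :=
    mul_le_mul_of_nonneg_left key hfrac
  have heq : lam / n * (n * (mnorm (mskew S') - n)) = lam * (mnorm (mskew S') - n) := by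
    field_simp
  nlinarith [mul_le_mul_of_nonneg_left (by linarith : mnorm (mskew S') + g2' - sh0 ≤ 0) hlam]
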